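/- arXiv:1310.5099 — 2 statements merged into one kernel-verified Lean document; each statement's English description precedes it below -/
import Mathlib

section
/- With P_{L,p} the p-lazy probability matrix related to an X^k_+-matrix L and A_{L,p} its propagation matrix, the intertwining relation A_{L,p} T = T P_{L,p} holds, where T sends a function f on S = X^k_± ∪ {Θ} to the cochain Tf(σ_+) = f(σ_+) − f(σ_-); hence T P_{L,p}^n ν = A_{L,p}^n T ν for all n. -/
open Matrix

/-- `L D_L⁻¹`, where `D_L` is the diagonal matrix with the nonzero diagonal entries of `L`
(and `1` elsewhere). -/
noncomputable def LDinv {ι : Type*} [Fintype ι] (L : Matrix ι ι ℝ) : Matrix ι ι ℝ :=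
  fun i j => L i j / (if L j j = 0 then 1 else L j j)

/-- `K = max_{σ_+} Σ_{σ'_+ ≠ σ_+} |(L D_L⁻¹)_{σ'_+, σ_+}|`. -/
noncomputable def Kconst {ι : Type*} [Fintype ι] [DecidableEq ι] [Nonempty ι]
    (L : Matrix ι ι ℝ) : ℝ :=
  Finset.univ.sup' Finset.univ_nonempty
    (fun j => ∑ i ∈ Finset.univ.erase j, |LDinv L i j|)

/-- The p-lazy propagation matrix `A_{L,p} = ((p(K-1)+1)/K) I - ((1-p)/K) L D_L⁻¹`. -/
noncomputable def Aprop {ι : Type*} [Fintype ι] [DecidableEq ι] [Nonempty ι]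
    (L : Matrix ι ι ℝ) (p : ℝ) : Matrix ι ι ℝ :=
  ((p * (Kconst L - 1) + 1) / Kconst L) • (1 : Matrix ι ι ℝ)
    - ((1 - p) / Kconst L) • LDinv L

/-- The p-lazy probability matrix `P_{L,p}` on `S = X^k_± ∪ {Θ} = (ι ⊕ ι) ⊕ Unit`. -/
noncomputable def Pprob {ι : Type*} [Fintype ι] [DecidableEq ι] [Nonempty ι]
    (L : Matrix ι ι ℝ) (p : ℝ) : Matrix ((ι ⊕ ι) ⊕ Unit) ((ι ⊕ ι) ⊕ Unit) ℝ :=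
  fun s' s =>
    match s', s with
    | .inl (.inl i), .inl (.inl j) => max 0 (Aprop L p i j)
    | .inl (.inr i), .inl (.inr j) => max 0 (Aprop L p i j)
    | .inl (.inr i), .inl (.inl j) => max 0 (-(Aprop L p i j))
    | .inl (.inl i), .inl (.inr j) => max 0 (-(Aprop L p i j))
    | .inl _, .inr _ => 0
    | .inr _, .inl (.inl j) =>
        1 - ∑ i : ι, (max 0 (Aprop L p i j) + max 0 (-(Aprop L p i j)))
    | .inr _, .inl (.inr j) =>
        1 - ∑ i : ι, (max 0 (Aprop L p i j) + max 0 (-(Aprop L p i j)))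
    | .inr _, .inr _ => 1

/-- The orientation-difference operator `T`, sending a function `f` on
`S = X^k_± ∪ {Θ}` to the cochain `Tf(σ_+) = f(σ_+) - f(σ_-)`. -/
noncomputable def Tmat {ι : Type*} [DecidableEq ι] : Matrix ι ((ι ⊕ ι) ⊕ Unit) ℝ :=
  fun τ s =>
    match s with
    | .inl (.inl σ) => if τ = σ then 1 else 0
    | .inl (.inr σ) => if τ = σ then -1 else 0
    | .inr _ => 0

/-! `T` kills the absorbing state and takes the difference of the two orientations, so
`(T P)(σ'_+, s) = P(σ'_+, s) - P(σ'_-, s)`. In `P_{L,p}` this difference is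
`max 0 a - max 0 (-a) = a` for `a = A_{L,p}(σ'_+, σ_+)` when `s = σ_+`, its negative when
`s = σ_-`, and `0` when `s = Θ`: exactly the entries of `A_{L,p} T`. Iterating the
intertwining relation gives the statement for powers. -/

section Intertwining

variable {ι κ : Type*} [Fintype ι] [DecidableEq ι]

-- Without `(ι := ι)` the product `_ * Tmat` is elaborated with the `CStarMatrix` instance and
-- these lemmas no longer rewrite plain matrix products.
theorem Tmat_mul_apply (M : Matrix ((ι ⊕ ι) ⊕ Unit) κ ℝ) (τ : ι) (s : κ) :
    (Tmat (ι := ι) * M) τ s = M (.inl (.inl τ)) s - M (.inl (.inr τ)) s := by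
  simp [mul_apply, Tmat, Fintype.sum_sum_type, ite_mul, sub_eq_add_neg]

theorem mul_Tmat_apply_inl_inl (B : Matrix κ ι ℝ) (k : κ) (σ : ι) :
    (B * Tmat (ι := ι)) k (.inl (.inl σ)) = B k σ := by
  simp [mul_apply, Tmat]

theorem mul_Tmat_apply_inl_inr (B : Matrix κ ι ℝ) (k : κ) (σ : ι) :
    (B * Tmat (ι := ι)) k (.inl (.inr σ)) = -B k σ := by
  simp [mul_apply, Tmat]

theorem mul_Tmat_apply_inr (B : Matrix κ ι ℝ) (k : κ) (u : Unit) :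
    (B * Tmat (ι := ι)) k (.inr u) = 0 := by
  simp [mul_apply, Tmat]

theorem Aprop_mul_Tmat [Nonempty ι] (L : Matrix ι ι ℝ) (p : ℝ) :
    Aprop L p * Tmat (ι := ι) = Tmat (ι := ι) * Pprob L p := by
  ext τ ((σ | σ) | u) <;> rw [Tmat_mul_apply] <;> dsimp only [Pprob]
  · rw [mul_Tmat_apply_inl_inl, max_comm 0, max_comm 0, max_zero_sub_max_neg_zero_eq_self]
  · rw [mul_Tmat_apply_inl_inr, max_comm 0, max_comm 0, ← neg_sub,
      max_zero_sub_max_neg_zero_eq_self]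
  · rw [mul_Tmat_apply_inr, sub_self]

end Intertwining

theorem Matrix.mul_pow_eq_pow_mul_of_mul_eq {m n R : Type*} [Fintype m] [DecidableEq m]
    [Fintype n] [DecidableEq n] [Semiring R] {A : Matrix m m R} {T : Matrix m n R}
    {P : Matrix n n R} (h : A * T = T * P) (k : ℕ) : T * P ^ k = A ^ k * T := by
  induction k with
  | zero => simp
  | succ k ih => rw [pow_succ, pow_succ, ← Matrix.mul_assoc, ih, Matrix.mul_assoc, ← h,
      Matrix.mul_assoc]

theorem stmt_16_general {ι : Type*} [Fintype ι] [DecidableEq ι] [Nonempty ι]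
    (L : Matrix ι ι ℝ)
    (p : ℝ) :
    Aprop L p * Tmat = Tmat * Pprob L p ∧
    ∀ (n : ℕ) (ν : ((ι ⊕ ι) ⊕ Unit) → ℝ),
      Tmat.mulVec ((Pprob L p ^ n).mulVec ν) = ((Aprop L p) ^ n).mulVec (Tmat.mulVec ν) := by
  have hAT := Aprop_mul_Tmat L p
  refine ⟨hAT, fun n ν => ?_⟩
  rw [mulVec_mulVec, mul_pow_eq_pow_mul_of_mul_eq hAT, ← mulVec_mulVec]

/-- With `P_{L,p}` the p-lazy probability matrix related to an `X^k_+`-matrix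
`L` and `A_{L,p}` its propagation matrix, the intertwining relation `A_{L,p} T = T P_{L,p}`
holds; hence `T P_{L,p}ⁿ ν = A_{L,p}ⁿ T ν` for all `n`. -/
theorem stmt_16 {ι : Type*} [Fintype ι] [DecidableEq ι] [Nonempty ι]
    (L : Matrix ι ι ℝ)
    (hdiag : ∀ i, 0 ≤ L i i)
    (hzero : ∀ i, L i i = 0 → ∀ j, L i j = 0 ∧ L j i = 0)
    (hK : 0 < Kconst L)
    (p : ℝ) (hp0 : 0 ≤ p) (hp1 : p ≤ 1) :
    Aprop L p * Tmat = Tmat * Pprob L p ∧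
    ∀ (n : ℕ) (ν : ((ι ⊕ ι) ⊕ Unit) → ℝ),
      Tmat.mulVec ((Pprob L p ^ n).mulVec ν) = ((Aprop L p) ^ n).mulVec (Tmat.mulVec ν) :=
  stmt_16_general L p
end

section
/- Let L be a symmetric positive semi-definite matrix partitioned as L = [[L_1, L_2],[L_3, L_4]] with corresponding positive-definite diagonal blocks D_1, D_4 of D_L. If no nonzero vector of ker L is supported on the coordinates of the second block, then the spectrum of L_4 D_4^{-1} is contained in (0, Λ] whenever Spec(D_L^{-1/2} L D_L^{-1/2}) ⊂ [0, Λ]; in particular L_4 is invertible. -/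
/-!
Write `M = D_L^{-1/2} L D_L^{-1/2}`. Its principal block on the second coordinates is
`S = D₄^{-1/2} L₄ D₄^{-1/2}`, which is similar to `L₄ D₄⁻¹`. A vector `x` with `xᵀ L₄ x = 0`
gives the vector `(0, x)` on which the quadratic form of the PSD matrix `L` vanishes, hence a
null vector of `L` supported on the second block; so `L₄`, and with it `S`, is positive
definite. The upper bound passes from `M` to `S` because `Λ • 1 - M ⪰ 0` restricts to the
principal block `Λ • 1 - S`.
-/

open Matrix
open scoped ComplexOrder

open scoped MatrixOrder in
theorem Matrix.IsHermitian.posSemidef_smul_one_sub_iff {n 𝕜 : Type*} [Fintype n] [DecidableEq n]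
    [RCLike 𝕜] {A : Matrix n n 𝕜} (hA : A.IsHermitian) (Λ : ℝ) :
    (Λ • (1 : Matrix n n 𝕜) - A).PosSemidef ↔ spectrum ℝ A ⊆ Set.Iic Λ := by
  rw [← Matrix.le_iff, ← Algebra.algebraMap_eq_smul_one, le_algebraMap_iff_spectrum_le hA]
  rfl

open scoped MatrixOrder in
theorem Matrix.PosDef.spectrum_subset_Ioi {n 𝕜 : Type*} [Fintype n] [DecidableEq n]
    [RCLike 𝕜] {A : Matrix n n 𝕜} (hA : A.PosDef) : spectrum ℝ A ⊆ Set.Ioi 0 :=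
  fun _ hx => hA.isStrictlyPositive.spectrum_pos hx

theorem Matrix.IsHermitian.spectrum_submatrix_subset_Iic {m n 𝕜 : Type*} [Fintype m]
    [Fintype n] [DecidableEq m] [DecidableEq n] [RCLike 𝕜] {A : Matrix n n 𝕜}
    (hA : A.IsHermitian) {Λ : ℝ} (h : spectrum ℝ A ⊆ Set.Iic Λ) {e : m → n}
    (he : Function.Injective e) :
    spectrum ℝ (A.submatrix e e) ⊆ Set.Iic Λ := by
  rw [← (hA.submatrix e).posSemidef_smul_one_sub_iff]
  simpa [submatrix_sub, submatrix_smul, submatrix_one e he] using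
    ((hA.posSemidef_smul_one_sub_iff Λ).2 h).submatrix e

theorem Matrix.PosSemidef.posDef_submatrix_inr {m n 𝕜 : Type*} [Fintype m] [Fintype n]
    [RCLike 𝕜] {L : Matrix (m ⊕ n) (m ⊕ n) 𝕜} (hL : L.PosSemidef)
    (hker : ∀ v, L *ᵥ v = 0 → (∀ i, v (Sum.inl i) = 0) → v = 0) :
    (L.submatrix Sum.inr Sum.inr).PosDef := by
  refine .of_dotProduct_mulVec_pos (hL.submatrix Sum.inr).isHermitian fun x hx => ?_
  have hform : star (Sum.elim 0 x) ⬝ᵥ L *ᵥ Sum.elim 0 x =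
      star x ⬝ᵥ L.submatrix Sum.inr Sum.inr *ᵥ x := by
    simp [dotProduct, mulVec, Fintype.sum_sum_type]
  refine (hL.submatrix Sum.inr).dotProduct_mulVec_nonneg x |>.lt_of_ne fun h0 => hx ?_
  have hv := hker (Sum.elim 0 x) ((hL.dotProduct_mulVec_zero_iff _).1 (hform.trans h0.symm))
    fun _ => rfl
  funext j
  exact congrFun hv (Sum.inr j)

theorem Matrix.submatrix_diagonal_mul_mul_diagonal {l m n R : Type*} [Fintype l] [Fintype m]
    [Fintype n] [DecidableEq l] [DecidableEq m] [DecidableEq n] [CommSemiring R] (f g : n → R)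
    (A : Matrix n n R) (e₁ : l → n) (e₂ : m → n) :
    (diagonal f * A * diagonal g).submatrix e₁ e₂ =
      diagonal (f ∘ e₁) * A.submatrix e₁ e₂ * diagonal (g ∘ e₂) := by
  ext i j
  simp [diagonal_mul, mul_diagonal]

theorem Matrix.spectrum_mul_diagonal_mul_self {n K : Type*} [Fintype n] [DecidableEq n] [Field K]
    (A : Matrix n n K) {f : n → K} (hf : ∀ i, f i ≠ 0) :
    spectrum K (A * diagonal (f * f)) = spectrum K (diagonal f * A * diagonal f) := by
  let u : (Matrix n n K)ˣ := ⟨diagonal f, diagonal f⁻¹, by simp [hf], by simp [hf]⟩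
  rw [← spectrum.units_conjugate (u := u)]
  simp [u, Matrix.mul_assoc, diagonal_mul_diagonal, hf]

/-- Let `L` be a symmetric positive semi-definite matrix partitioned (over the
index type `ι₁ ⊕ ι₂`) into blocks `L₁, L₂, L₃, L₄`, with positive-definite diagonal matrix
`D_L = diagonal d` and diagonal blocks `D₁, D₄`.  If no nonzero vector of `ker L` is supported
on the second block (i.e. vanishes on all first-block coordinates), then
`Spec(D_L^{-1/2} L D_L^{-1/2}) ⊆ [0,Λ]` implies `Spec(L₄ D₄⁻¹) ⊆ (0,Λ]`; in particular `L₄`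
is invertible. -/
theorem stmt_18 {ι₁ ι₂ : Type*} [Fintype ι₁] [Fintype ι₂] [DecidableEq ι₁] [DecidableEq ι₂]
    (L : Matrix (ι₁ ⊕ ι₂) (ι₁ ⊕ ι₂) ℝ) (hL : L.PosSemidef)
    (d : ι₁ ⊕ ι₂ → ℝ) (hd : ∀ i, 0 < d i)
    (Λ : ℝ)
    (hspec : spectrum ℝ
        (Matrix.diagonal (fun i => (Real.sqrt (d i))⁻¹) * L *
          Matrix.diagonal (fun i => (Real.sqrt (d i))⁻¹)) ⊆ Set.Icc 0 Λ)
    (hker : ∀ v : (ι₁ ⊕ ι₂) → ℝ, L.mulVec v = 0 → (∀ i : ι₁, v (Sum.inl i) = 0) → v = 0) :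
    spectrum ℝ
        (L.submatrix Sum.inr Sum.inr *
          Matrix.diagonal (fun i : ι₂ => (d (Sum.inr i))⁻¹)) ⊆ Set.Ioc 0 Λ ∧
    IsUnit (L.submatrix Sum.inr Sum.inr) := by
  set g : ι₁ ⊕ ι₂ → ℝ := fun i => (Real.sqrt (d i))⁻¹
  have hg : ∀ i, g i ≠ 0 := fun i => inv_ne_zero (Real.sqrt_pos.2 (hd i)).ne'
  have hL₄ : (L.submatrix Sum.inr Sum.inr).PosDef := hL.posDef_submatrix_inr hker
  have hM : (diagonal g * L * diagonal g).IsHermitian := by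
    simpa using (hL.conjTranspose_mul_mul_same (diagonal g)).isHermitian
  have hS_pos : (diagonal (g ∘ Sum.inr) * L.submatrix Sum.inr Sum.inr *
      diagonal (g ∘ Sum.inr)).PosDef := by
    simpa using hL₄.conjTranspose_mul_mul_same (B := diagonal (g ∘ Sum.inr))
      (mulVec_injective_iff_isUnit.2 <| isUnit_diagonal.2 <| Pi.isUnit_iff.2 fun _ => (hg _).isUnit)
  have hS_le : spectrum ℝ (diagonal (g ∘ Sum.inr) * L.submatrix Sum.inr Sum.inr *
      diagonal (g ∘ Sum.inr)) ⊆ Set.Iic Λ := by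
    simpa only [submatrix_diagonal_mul_mul_diagonal] using
      hM.spectrum_submatrix_subset_Iic (hspec.trans Set.Icc_subset_Iic_self) Sum.inr_injective
  have hD : diagonal (fun i : ι₂ => (d (Sum.inr i))⁻¹) =
      diagonal (g ∘ Sum.inr * g ∘ Sum.inr) := by
    congr 1
    funext i
    simp [g, ← mul_inv, Real.mul_self_sqrt (hd _).le]
  refine ⟨?_, hL₄.isUnit⟩
  rw [hD, spectrum_mul_diagonal_mul_self _ (f := g ∘ Sum.inr) fun _ => hg _]
  exact fun μ hμ => ⟨hS_pos.spectrum_subset_Ioi hμ, hS_le hμ⟩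
end
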